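/- arXiv:1502.02724 — 4 statements merged into one kernel-verified Lean document; each statement's English description precedes it below -/
import Mathlib

section
/- Let A be a real 2×2 matrix with entries a₁₁, a₁₂, a₂₁, a₂₂ satisfying a₁₂ ≠ 0, let b = (b₁, b₂) ∈ ℝ², let c ≠ 0 be real, and set k = a₁₂²c², τ = trace A, δ = det A, χ = sgn(a₁₂c). Define x = u/k, y = (−a₂₂u + a₁₂w + b₁η)/k, μ = ((1−a₂₂)b₁ + a₁₂b₂)η/k. If u ≥ 0, (u', w') = A·(u, w − c√u) + b·η, and (x', y') are the new coordinates of (u', w'), then x' = τx + y − χ√x and y' = −δx + μ. In particular x ≥ 0 and the map in new coordinates equals the impacting branch of the Nordmark normal form. -/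
/-! The coordinate change is linear in `(u, w, η)` and the map is affine in `(u, w, √u)`, so both
identities are polynomial identities in `k⁻¹`, except for the square-root term: since
`k = (a₁₂c)²`, we have `χ √x = sgn(a₁₂c) √u / |a₁₂c| = a₁₂c √u / k`. The `w` and `√u`
terms cancel in `y'`, which is what the choice of `y` achieves. -/

namespace Real

theorem sign_mul_abs (r : ℝ) : sign r * |r| = r := by
  obtain hn | rfl | hp := lt_trichotomy r 0
  · rw [sign_of_neg hn, abs_of_neg hn, neg_one_mul, neg_neg]
  · rw [abs_zero, mul_zero]
  · rw [sign_of_pos hp, abs_of_pos hp, one_mul]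

theorem sign_mul_sqrt_div_sq (s u : ℝ) : sign s * √(u / s ^ 2) = s * √u / s ^ 2 := by
  rcases eq_or_ne s 0 with rfl | hs
  · simp
  have hs' : |s| ≠ 0 := abs_ne_zero.mpr hs
  rw [sqrt_div' u (sq_nonneg s), sqrt_sq_eq_abs, ← sq_abs]
  field_simp
  linear_combination √u * sign_mul_abs s

end Real

theorem nordmark_impacting_normal_form_general
    (a11 a12 a21 a22 b1 b2 c η u w u' w' : ℝ)
    (A : Matrix (Fin 2) (Fin 2) ℝ) (hA : A = !![a11, a12; a21, a22])
    (k τ δ χ x y μ x' y' : ℝ)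
    (hk : k = a12 ^ 2 * c ^ 2)
    (hτ : τ = A.trace) (hδ : δ = A.det) (hχ : χ = Real.sign (a12 * c))
    (hx : x = u / k)
    (hy : y = (-a22 * u + a12 * w + b1 * η) / k)
    (hμ : μ = ((1 - a22) * b1 + a12 * b2) * η / k)
    (hu : 0 ≤ u)
    (hu' : u' = a11 * u + a12 * (w - c * Real.sqrt u) + b1 * η)
    (hw' : w' = a21 * u + a22 * (w - c * Real.sqrt u) + b2 * η)
    (hx' : x' = u' / k)
    (hy' : y' = (-a22 * u' + a12 * w' + b1 * η) / k) :
    0 ≤ x ∧ x' = τ * x + y - χ * Real.sqrt x ∧ y' = -δ * x + μ := by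
  rw [← mul_pow] at hk
  have hτ' : τ = a11 + a22 := by rw [hτ, hA, Matrix.trace_fin_two_of]
  have hδ' : δ = a11 * a22 - a12 * a21 := by rw [hδ, hA, Matrix.det_fin_two_of]
  have hχx : χ * √x = a12 * c * √u / k := by
    rw [hχ, hx, hk, Real.sign_mul_sqrt_div_sq]
  refine ⟨hx ▸ div_nonneg hu (hk ▸ sq_nonneg _), ?_, ?_⟩
  · rw [hχx, hx', hu', hτ', hx, hy]
    ring
  · rw [hy', hu', hw', hδ', hx, hμ]
    ring

/-- The coordinate change `x = u/k`, `y = (−a₂₂u + a₁₂w + b₁η)/k`,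
`μ = ((1−a₂₂)b₁ + a₁₂b₂)η/k`, with `k = a₁₂²c²`, transforms the impacting branch
`(u,w) ↦ A(u, w − c√u) + bη` (for `u ≥ 0`) into the impacting branch of the Nordmark
normal form `(x,y) ↦ (τx + y − χ√x, −δx + μ)`, with `τ = trace A`, `δ = det A`,
`χ = sgn(a₁₂c)`; moreover `x ≥ 0`. -/
theorem nordmark_impacting_normal_form
    (a11 a12 a21 a22 b1 b2 c η u w u' w' : ℝ)
    (ha12 : a12 ≠ 0) (hc : c ≠ 0)
    (A : Matrix (Fin 2) (Fin 2) ℝ) (hA : A = !![a11, a12; a21, a22])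
    (k τ δ χ x y μ x' y' : ℝ)
    (hk : k = a12 ^ 2 * c ^ 2)
    (hτ : τ = A.trace) (hδ : δ = A.det) (hχ : χ = Real.sign (a12 * c))
    (hx : x = u / k)
    (hy : y = (-a22 * u + a12 * w + b1 * η) / k)
    (hμ : μ = ((1 - a22) * b1 + a12 * b2) * η / k)
    (hu : 0 ≤ u)
    (hu' : u' = a11 * u + a12 * (w - c * Real.sqrt u) + b1 * η)
    (hw' : w' = a21 * u + a22 * (w - c * Real.sqrt u) + b2 * η)
    (hx' : x' = u' / k)
    (hy' : y' = (-a22 * u' + a12 * w' + b1 * η) / k) :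
    0 ≤ x ∧ x' = τ * x + y - χ * Real.sqrt x ∧ y' = -δ * x + μ :=
  nordmark_impacting_normal_form_general a11 a12 a21 a22 b1 b2 c η u w u' w' A hA k τ δ χ x y μ x'
    y' hk hτ hδ hχ hx hy hμ hu hu' hw' hx' hy'
end

section
/- Let A be a real 2×2 matrix with entries a₁₁, a₁₂, a₂₁, a₂₂ satisfying a₁₂ ≠ 0, let b = (b₁, b₂) ∈ ℝ², let c ≠ 0 be real, and set k = a₁₂²c², τ = trace A, δ = det A, χ = sgn(a₁₂c). Define x = u/k, y = (−a₂₂u + a₁₂w + b₁η)/k, μ = ((1−a₂₂)b₁ + a₁₂b₂)η/k. Let ξ ∈ ℝ with u + ξ ≥ 0. If (u', w') = A·(u, w − c√(u+ξ)) + b·η and (x', y') are the new coordinates of (u', w'), then x' = τx + y − χ√(x + ξ/k) and y' = −δx + μ; moreover the switching condition u + ξ ≥ 0 is equivalent to x + ξ/k ≥ 0. -/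
/-- The coordinate change `x = u/k`, `y = (−a₂₂u + a₁₂w + b₁η)/k`,
`μ = ((1−a₂₂)b₁ + a₁₂b₂)η/k`, with `k = a₁₂²c²`, transforms the noisy impacting branch
`(u,w) ↦ A(u, w − c√(u+ξ)) + bη` (applied when `u + ξ ≥ 0`) into the impacting branch of
the stochastic Nordmark map `N₁`: `(x,y) ↦ (τx + y − χ√(x + ξ/k), −δx + μ)`,
and the switching condition `u + ξ ≥ 0` is equivalent to `x + ξ/k ≥ 0`. -/
theorem stochastic_nordmark_N1_normal_form
    (a11 a12 a21 a22 b1 b2 c η ξ u w u' w' : ℝ)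
    (ha12 : a12 ≠ 0) (hc : c ≠ 0)
    (A : Matrix (Fin 2) (Fin 2) ℝ) (hA : A = !![a11, a12; a21, a22])
    (k τ δ χ x y μ x' y' : ℝ)
    (hk : k = a12 ^ 2 * c ^ 2)
    (hτ : τ = A.trace) (hδ : δ = A.det) (hχ : χ = Real.sign (a12 * c))
    (hx : x = u / k)
    (hy : y = (-a22 * u + a12 * w + b1 * η) / k)
    (hμ : μ = ((1 - a22) * b1 + a12 * b2) * η / k)
    (huξ : 0 ≤ u + ξ)
    (hu' : u' = a11 * u + a12 * (w - c * Real.sqrt (u + ξ)) + b1 * η)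
    (hw' : w' = a21 * u + a22 * (w - c * Real.sqrt (u + ξ)) + b2 * η)
    (hx' : x' = u' / k)
    (hy' : y' = (-a22 * u' + a12 * w' + b1 * η) / k) :
    x' = τ * x + y - χ * Real.sqrt (x + ξ / k) ∧
    y' = -δ * x + μ ∧
    (0 ≤ u + ξ ↔ 0 ≤ x + ξ / k) := by
  have hac : a12 * c ≠ 0 := mul_ne_zero ha12 hc
  have hkpos : 0 < k := by
    rw [hk]
    positivity
  have hkne : k ≠ 0 := ne_of_gt hkpos
  have hτ' : τ = a11 + a22 := by
    rw [hτ, hA, Matrix.trace_fin_two_of]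
  have hδ' : δ = a11 * a22 - a12 * a21 := by
    rw [hδ, hA, Matrix.det_fin_two_of]
  have hxk : x + ξ / k = (u + ξ) / k := by
    rw [hx]; ring
  have hsqrtk : Real.sqrt k = |a12 * c| := by
    rw [hk, show a12 ^ 2 * c ^ 2 = (a12 * c) ^ 2 by ring, Real.sqrt_sq_eq_abs]
  have habs : |a12 * c| ≠ 0 := abs_ne_zero.mpr hac
  have hχsqrt : χ * Real.sqrt (x + ξ / k) = a12 * c * Real.sqrt (u + ξ) / k := by
    rw [hxk, Real.sqrt_div huξ, hsqrtk, hχ]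
    have hsign : Real.sign (a12 * c) * |a12 * c| = a12 * c := by
      rcases lt_or_gt_of_ne hac with h | h
      · rw [Real.sign_of_neg h, abs_of_neg h]; ring
      · rw [Real.sign_of_pos h, abs_of_pos h]; ring
    have hksq : |a12 * c| * |a12 * c| = k := by
      rw [← abs_mul, abs_of_nonneg (mul_self_nonneg _), hk]; ring
    field_simp
    linear_combination (Real.sqrt (u + ξ) * |a12 * c|) * hsign -
      Real.sign (a12 * c) * Real.sqrt (u + ξ) * hksq
  refine ⟨?_, ?_, ?_⟩
  · rw [hx', hu', hχsqrt, hτ', hx, hy]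
    field_simp
    ring
  · rw [hy', hu', hw', hδ', hx, hμ]
    field_simp
    ring
  · constructor <;> intro h
    · rw [hxk]; positivity
    · exact huξ
end

section
/- Let α_L, β_L, α_R, β_R > 0, γ_L, γ_R ∈ ℝ with γ_L/β_L − γ_R/β_R ≠ 0, let ξ ∈ ℝ with β_R − ξ ≠ 0, and let u₁ > 0, w₁ ∈ ℝ. Define v₂ = √(2β_L/α_L)·√u₁, w₂ = w₁ − (√2·γ_L/√(α_Lβ_L))·√u₁, v₃ = −v₂, w₃ = w₂ + (2γ_R/(β_R − ξ))·v₂, u₄ = (α_L/(2β_L))·v₃², and w₄ = w₃ + (γ_L/β_L)·v₃. Then u₄ = u₁ and w₄ = w₁ − c·κ₂(ξ)·√u₁, where c = (2√(2β_L)/√α_L)·(γ_L/β_L − γ_R/β_R) and κ₂(ξ) = (γ_L/β_L − γ_R/(β_R − ξ))/(γ_L/β_L − γ_R/β_R). -/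
/-!
Along each side `ẇ / v̇ = −γ/β`, and `u + α v² / (2β)` is conserved on the left, so the left flight
from `(u₁, 0)` meets `u = 0` at `|v| = v₂ = √(2β_L/α_L) √u₁`, which also gives `u₄ = u₁`. The three
steps shift `w` by `−(γ_L/β_L) v₂ + (2γ_R/(β_R − ξ)) v₂ − (γ_L/β_L) v₂`, and `c κ₂(ξ)` is
`2 √(2β_L/α_L) (γ_L/β_L − γ_R/(β_R − ξ))` once the deterministic factor cancels.
-/

open Real

theorem sq_sqrt_mul_sqrt_of_nonneg {a u : ℝ} (ha : 0 ≤ a) (hu : 0 ≤ u) :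
    (√a * √u) ^ 2 = a * u := by
  rw [mul_pow, sq_sqrt ha, sq_sqrt hu]

theorem div_mul_sqrt_two_mul_div {α β : ℝ} (γ : ℝ) (hβ : 0 < β) :
    γ / β * √(2 * β / α) = √2 * γ / √(α * β) := by
  have hsβ : √β ^ 2 = β := sq_sqrt hβ.le
  rw [sqrt_div (by positivity), sqrt_mul zero_le_two, sqrt_mul' α hβ.le]
  rcases eq_or_ne √α 0 with hα | hα
  · simp [hα]
  · field_simp
    rw [hsβ]

theorem stochastic_discontinuity_map_N2_general
    (αL βL βR γL γR ξ u₁ w₁ : ℝ)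
    (hαL : 0 < αL) (hβL : 0 < βL)
    (hne : γL / βL - γR / βR ≠ 0)
    (hu₁ : 0 < u₁)
    (v₂ w₂ v₃ w₃ u₄ w₄ c κ₂ : ℝ)
    (hv₂ : v₂ = Real.sqrt (2 * βL / αL) * Real.sqrt u₁)
    (hw₂ : w₂ = w₁ - Real.sqrt 2 * γL / Real.sqrt (αL * βL) * Real.sqrt u₁)
    (hv₃ : v₃ = -v₂)
    (hw₃ : w₃ = w₂ + 2 * γR / (βR - ξ) * v₂)
    (hu₄ : u₄ = αL / (2 * βL) * v₃ ^ 2)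
    (hw₄ : w₄ = w₃ + γL / βL * v₃)
    (hc : c = 2 * Real.sqrt (2 * βL) / Real.sqrt αL * (γL / βL - γR / βR))
    (hκ₂ : κ₂ = (γL / βL - γR / (βR - ξ)) / (γL / βL - γR / βR)) :
    u₄ = u₁ ∧ w₄ = w₁ - c * κ₂ * Real.sqrt u₁ := by
  have hv₂sq : v₂ ^ 2 = 2 * βL / αL * u₁ := by
    rw [hv₂, sq_sqrt_mul_sqrt_of_nonneg (by positivity) hu₁.le]
  have hcκ₂ : c * κ₂ = 2 * √(2 * βL / αL) * (γL / βL - γR / (βR - ξ)) := by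
    rw [hc, hκ₂, sqrt_div (by positivity), mul_assoc, mul_div_cancel₀ _ hne, mul_div_assoc]
  refine ⟨?_, ?_⟩
  · rw [hu₄, hv₃, neg_sq, hv₂sq]
    field_simp
  · rw [hw₄, hw₃, hw₂, hv₃, hv₂, hcκ₂, ← div_mul_sqrt_two_mul_div γL hβL]
    ring

/-- Composing the three leading-order steps of the stochastic discontinuity map with
coloured noise `ξ` replacing `β_R` by `β_R − ξ` gives `u₄ = u₁` and
`w₄ = w₁ − c·κ₂(ξ)·√u₁`, where `c = (2√(2β_L)/√α_L)(γ_L/β_L − γ_R/β_R)` and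
`κ₂(ξ) = (γ_L/β_L − γ_R/(β_R − ξ))/(γ_L/β_L − γ_R/β_R)`. -/
theorem stochastic_discontinuity_map_N2
    (αL βL αR βR γL γR ξ u₁ w₁ : ℝ)
    (hαL : 0 < αL) (hβL : 0 < βL) (hαR : 0 < αR) (hβR : 0 < βR)
    (hne : γL / βL - γR / βR ≠ 0) (hξ : βR - ξ ≠ 0)
    (hu₁ : 0 < u₁)
    (v₂ w₂ v₃ w₃ u₄ w₄ c κ₂ : ℝ)
    (hv₂ : v₂ = Real.sqrt (2 * βL / αL) * Real.sqrt u₁)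
    (hw₂ : w₂ = w₁ - Real.sqrt 2 * γL / Real.sqrt (αL * βL) * Real.sqrt u₁)
    (hv₃ : v₃ = -v₂)
    (hw₃ : w₃ = w₂ + 2 * γR / (βR - ξ) * v₂)
    (hu₄ : u₄ = αL / (2 * βL) * v₃ ^ 2)
    (hw₄ : w₄ = w₃ + γL / βL * v₃)
    (hc : c = 2 * Real.sqrt (2 * βL) / Real.sqrt αL * (γL / βL - γR / βR))
    (hκ₂ : κ₂ = (γL / βL - γR / (βR - ξ)) / (γL / βL - γR / βR)) :
    u₄ = u₁ ∧ w₄ = w₁ - c * κ₂ * Real.sqrt u₁ :=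
  stochastic_discontinuity_map_N2_general αL βL βR γL γR ξ u₁ w₁ hαL hβL hne hu₁ v₂ w₂ v₃ w₃ u₄ w₄ c
    κ₂ hv₂ hw₂ hv₃ hw₃ hu₄ hw₄ hc hκ₂
end

section
/- Let α_L, β_L, β_R > 0, γ_L, γ_R ∈ ℝ with γ_L/β_L − γ_R/β_R ≠ 0, let r, h ∈ ℝ, and let u₁ > 0, w₁ ∈ ℝ. Define v₂ = √(2β_L/α_L)·√u₁, w₂ = w₁ − (√2·γ_L/√(α_Lβ_L))·√u₁, v₃ = −h·v₂, w₃ = w₂ + (γ_R·r/β_R)·v₂, u₄ = (α_L/(2β_L))·v₃², and w₄ = w₃ + (γ_L/β_L)·v₃. Then u₄ = h²·u₁ and w₄ = w₁ − c·κ₃(r,h)·√u₁, where c = (2√(2β_L)/√α_L)·(γ_L/β_L − γ_R/β_R) and κ₃(r,h) = (γ_L(h+1)/(2β_L) − γ_R·r/(2β_R))/(γ_L/β_L − γ_R/β_R). -/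
/-!
With `v₂ = √(2β_L/α_L)·√u₁`, the first step is `w₂ = w₁ − (γ_L/β_L)·v₂`, so all three
increments of `w` are multiples of `v₂` and add up to `−(γ_L(h+1)/β_L − γ_R r/β_R)·v₂`,
which is `−c·κ₃·√u₁` once the factor `γ_L/β_L − γ_R/β_R` of `c` cancels the denominator of
`κ₃`. For `u`, the factor `α_L/(2β_L)` inverts `√(2β_L/α_L)²`, leaving `h²u₁`.
-/

theorem div_mul_sq_sqrt_div {a b : ℝ} (ha : 0 < a) (hb : 0 < b) : a / b * √(b / a) ^ 2 = 1 := by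
  rw [Real.sq_sqrt (by positivity)]
  field_simp

theorem sqrt_div_sqrt_mul {a b c : ℝ} (hc : 0 ≤ c) (hb : 0 < b) :
    √c / √(a * b) = √(c * b / a) / b := by
  have hsb : √b ≠ 0 := (Real.sqrt_pos.2 hb).ne'
  rw [Real.sqrt_div (mul_nonneg hc hb.le), Real.sqrt_mul hc, Real.sqrt_mul' _ hb.le]
  field_simp
  rw [Real.sq_sqrt hb.le]

theorem stochastic_discontinuity_map_N3_general
    (αL βL βR γL γR r h u₁ w₁ : ℝ)
    (hαL : 0 < αL) (hβL : 0 < βL)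
    (hne : γL / βL - γR / βR ≠ 0)
    (hu₁ : 0 < u₁)
    (v₂ w₂ v₃ w₃ u₄ w₄ c κ₃ : ℝ)
    (hv₂ : v₂ = Real.sqrt (2 * βL / αL) * Real.sqrt u₁)
    (hw₂ : w₂ = w₁ - Real.sqrt 2 * γL / Real.sqrt (αL * βL) * Real.sqrt u₁)
    (hv₃ : v₃ = -h * v₂)
    (hw₃ : w₃ = w₂ + γR * r / βR * v₂)
    (hu₄ : u₄ = αL / (2 * βL) * v₃ ^ 2)
    (hw₄ : w₄ = w₃ + γL / βL * v₃)
    (hc : c = 2 * Real.sqrt (2 * βL) / Real.sqrt αL * (γL / βL - γR / βR))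
    (hκ₃ : κ₃ = (γL * (h + 1) / (2 * βL) - γR * r / (2 * βR)) / (γL / βL - γR / βR)) :
    u₄ = h ^ 2 * u₁ ∧ w₄ = w₁ - c * κ₃ * Real.sqrt u₁ := by
  have hscale : αL / (2 * βL) * √(2 * βL / αL) ^ 2 = 1 := div_mul_sq_sqrt_div hαL (by positivity)
  have hu₁sq : √u₁ ^ 2 = u₁ := Real.sq_sqrt hu₁.le
  have hw₂' : w₂ = w₁ - γL / βL * v₂ := by
    have hcoef : √2 / √(αL * βL) = √(2 * βL / αL) / βL := sqrt_div_sqrt_mul zero_le_two hβL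
    rw [hw₂, hv₂, mul_div_right_comm, hcoef]
    ring
  have hcκ : c * κ₃ * √u₁ = (γL * (h + 1) / βL - γR * r / βR) * v₂ := by
    rw [hc, hκ₃, hv₂, Real.sqrt_div' _ hαL.le, mul_assoc _ (γL / βL - γR / βR),
      mul_div_cancel₀ _ hne]
    field_simp
  constructor
  · rw [hu₄, hv₃, hv₂]
    linear_combination (h ^ 2 * √u₁ ^ 2) * hscale + h ^ 2 * hu₁sq
  · rw [hw₄, hw₃, hw₂', hv₃, hcκ]
    ring

/-- Composing the three leading-order steps of the stochastic discontinuity map with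
white-noise return data `(r, h)` gives `u₄ = h²u₁` and `w₄ = w₁ − c·κ₃(r,h)·√u₁`, where
`c = (2√(2β_L)/√α_L)(γ_L/β_L − γ_R/β_R)` and
`κ₃(r,h) = (γ_L(h+1)/(2β_L) − γ_R r/(2β_R))/(γ_L/β_L − γ_R/β_R)`. -/
theorem stochastic_discontinuity_map_N3
    (αL βL βR γL γR r h u₁ w₁ : ℝ)
    (hαL : 0 < αL) (hβL : 0 < βL) (hβR : 0 < βR)
    (hne : γL / βL - γR / βR ≠ 0)
    (hu₁ : 0 < u₁)
    (v₂ w₂ v₃ w₃ u₄ w₄ c κ₃ : ℝ)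
    (hv₂ : v₂ = Real.sqrt (2 * βL / αL) * Real.sqrt u₁)
    (hw₂ : w₂ = w₁ - Real.sqrt 2 * γL / Real.sqrt (αL * βL) * Real.sqrt u₁)
    (hv₃ : v₃ = -h * v₂)
    (hw₃ : w₃ = w₂ + γR * r / βR * v₂)
    (hu₄ : u₄ = αL / (2 * βL) * v₃ ^ 2)
    (hw₄ : w₄ = w₃ + γL / βL * v₃)
    (hc : c = 2 * Real.sqrt (2 * βL) / Real.sqrt αL * (γL / βL - γR / βR))
    (hκ₃ : κ₃ = (γL * (h + 1) / (2 * βL) - γR * r / (2 * βR)) / (γL / βL - γR / βR)) :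
    u₄ = h ^ 2 * u₁ ∧ w₄ = w₁ - c * κ₃ * Real.sqrt u₁ :=
  stochastic_discontinuity_map_N3_general αL βL βR γL γR r h u₁ w₁ hαL hβL hne hu₁ v₂ w₂ v₃ w₃ u₄ w₄
    c κ₃ hv₂ hw₂ hv₃ hw₃ hu₄ hw₄ hc hκ₃
end
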